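/- Let k ∈ ℕ and let M, M' ∈ 𝔽₂^{k×k} be skew-symmetric such that M + M' is invertible over 𝔽₂. For w ∈ 𝔽₂^k define u_{M,w} ∈ ℝ^{𝔽₂^k} by u_{M,w}(x) := 2^{−k/2}·(−1)^{Q_M(x)+wᵀx}, and similarly u_{M',w'}. Then for every w, w' ∈ 𝔽₂^k, ⟨u_{M,w}, u_{M',w'}⟩² = 2^{−k}; that is, the orthonormal bases {u_{M,w}}_{w} and {u_{M',w'}}_{w'} are unbiased. -/

import Mathlib

open Matrix

/-- The quadratic form `Q_M(x) = xᵀ M̃ x` where `M̃` is the strictly upper-triangular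
part of `M`. -/
def Qform (k : ℕ) (M : Matrix (Fin k) (Fin k) (ZMod 2)) (x : Fin k → ZMod 2) : ZMod 2 :=
  x ⬝ᵥ (Matrix.of fun i j : Fin k => if (i : ℕ) < (j : ℕ) then M i j else 0).mulVec x

/-- The vector `u_{M,w} ∈ ℝ^{𝔽₂^k}` with `u_{M,w}(x) = 2^{−k/2}·(−1)^{Q_M(x)+wᵀx}`. -/
noncomputable def kerdockVec (k : ℕ) (M : Matrix (Fin k) (Fin k) (ZMod 2))
    (w : Fin k → ZMod 2) (x : Fin k → ZMod 2) : ℝ :=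
  ((Real.sqrt 2)⁻¹) ^ k * (-1 : ℝ) ^ (Qform k M x + w ⬝ᵥ x).val

/-!
Since `Q_M` is additive in `M`, the product `u_{M,w}(x) u_{M',w'}(x)` equals
`2^{-k} (-1)^{f(x)}` with `f(x) = Q_N(x) + vᵀx`, `N = M + M'`, `v = w + w'`.
For skew-symmetric `N` we have `Ñ + Ñᵀ = N`, so `f(x + z) = f(x) + f(z) + xᵀNz`.
Substituting `y = x + z` in the square of `S = ∑ₓ (-1)^{f(x)}` gives
`S² = ∑_z (-1)^{f(z)} ∑ₓ (-1)^{xᵀNz}`; the inner character sum vanishes unless `Nz = 0`,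
i.e. unless `z = 0` since `N` is invertible, so `S² = 2^k`.
-/

open Finset

namespace Matrix

variable {ι R : Type*} [LinearOrder ι]

def strictUpper [Zero R] (N : Matrix ι ι R) : Matrix ι ι R :=
  of fun i j => if i < j then N i j else 0

lemma strictUpper_add [AddZeroClass R] (M N : Matrix ι ι R) :
    (M + N).strictUpper = M.strictUpper + N.strictUpper := by
  ext i j
  simp only [strictUpper, of_apply, add_apply]
  split_ifs <;> simp

lemma strictUpper_add_transpose [AddZeroClass R] {N : Matrix ι ι R}
    (hdiag : ∀ i, N i i = 0) (hsym : ∀ i j, N i j = N j i) :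
    N.strictUpper + N.strictUpperᵀ = N := by
  ext i j
  simp only [strictUpper, add_apply, transpose_apply, of_apply]
  rcases lt_trichotomy i j with h | rfl | h
  · simp [h, h.not_gt]
  · simp [hdiag]
  · simp [h, h.not_gt, hsym i j]

lemma dotProduct_strictUpper_mulVec_add [Fintype ι] [CommSemiring R] {N : Matrix ι ι R}
    (hdiag : ∀ i, N i i = 0) (hsym : ∀ i j, N i j = N j i) (x z : ι → R) :
    (x + z) ⬝ᵥ N.strictUpper *ᵥ (x + z)
      = x ⬝ᵥ N.strictUpper *ᵥ x + z ⬝ᵥ N.strictUpper *ᵥ z + x ⬝ᵥ N *ᵥ z := by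
  have hswap : z ⬝ᵥ N.strictUpper *ᵥ x = x ⬝ᵥ N.strictUpperᵀ *ᵥ z := by
    rw [dotProduct_mulVec, dotProduct_comm, ← mulVec_transpose]
  have hN : x ⬝ᵥ N.strictUpper *ᵥ z + x ⬝ᵥ N.strictUpperᵀ *ᵥ z = x ⬝ᵥ N *ᵥ z := by
    rw [← dotProduct_add, ← add_mulVec, strictUpper_add_transpose hdiag hsym]
  rw [mulVec_add, dotProduct_add, add_dotProduct, add_dotProduct, hswap, ← hN]
  ring

end Matrix

def signChar : AddChar (ZMod 2) ℝ where
  toFun a := (-1) ^ a.val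
  map_zero_eq_one' := by simp
  map_add_eq_mul' a b := by rw [ZMod.val_add, ← neg_one_pow_eq_pow_mod_two, pow_add]

lemma signChar_one : signChar 1 = -1 := by
  simp [signChar, show (1 : ZMod 2).val = 1 from rfl]

section CharacterSums

variable {ι : Type*} [Fintype ι] [DecidableEq ι]

lemma sum_signChar_dotProduct (u : ι → ZMod 2) :
    ∑ x : ι → ZMod 2, signChar (u ⬝ᵥ x) = if u = 0 then 2 ^ Fintype.card ι else 0 := by
  let ψ : AddChar (ι → ZMod 2) ℝ :=
    signChar.compAddMonoidHom (dotProductBilin ℕ ℕ u).toAddMonoidHom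
  have hψ : ψ = 0 ↔ u = 0 := by
    refine ⟨fun h => ?_, fun h => ?_⟩
    · by_contra hu
      obtain ⟨i, hi⟩ := Function.ne_iff.mp hu
      have hui : u i = 1 := (by decide : ∀ a : ZMod 2, a ≠ 0 → a = 1) _ hi
      have := DFunLike.congr_fun h (Pi.single i 1)
      norm_num [ψ, hui, signChar_one] at this
    · ext x
      simp [ψ, h]
  simpa [hψ, ψ, Fintype.card_fun] using ψ.sum_eq_ite

lemma sq_sum_signChar_of_polarization {N : Matrix ι ι (ZMod 2)}
    (hN : Function.Injective N.mulVec) (f : (ι → ZMod 2) → ZMod 2)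
    (hf : ∀ x z, f (x + z) = f x + f z + x ⬝ᵥ N *ᵥ z) :
    (∑ x, signChar (f x)) ^ 2 = 2 ^ Fintype.card ι := by
  have hf0 : f 0 = 0 := by
    have h := hf 0 0
    rw [add_zero, zero_dotProduct, add_zero] at h
    linear_combination -h
  have hpair : ∀ x z, signChar (f x) * signChar (f (x + z))
      = signChar (f z) * signChar ((N *ᵥ z) ⬝ᵥ x) := by
    intro x z
    rw [← AddChar.map_add_eq_mul, ← AddChar.map_add_eq_mul, hf, dotProduct_comm]
    congr 1
    linear_combination f x * (CharTwo.two_eq_zero : (2 : ZMod 2) = 0)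
  calc (∑ x, signChar (f x)) ^ 2
      = ∑ x, ∑ z, signChar (f x) * signChar (f (x + z)) := by
        rw [sq, sum_mul_sum]
        refine sum_congr rfl fun x _ => ?_
        exact (Fintype.sum_equiv (Equiv.addLeft x) _ _ fun z => rfl).symm
    _ = ∑ z, signChar (f z) * ∑ x, signChar ((N *ᵥ z) ⬝ᵥ x) := by
        rw [sum_comm]
        simp_rw [hpair, ← mul_sum]
    _ = 2 ^ Fintype.card ι := by
        simp [sum_signChar_dotProduct, hN.eq_iff' (mulVec_zero N), hf0]

end CharacterSums

lemma Qform_eq_dotProduct_strictUpper_mulVec (k : ℕ) (M : Matrix (Fin k) (Fin k) (ZMod 2))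
    (x : Fin k → ZMod 2) : Qform k M x = x ⬝ᵥ M.strictUpper *ᵥ x := rfl

lemma Qform_add (k : ℕ) (M M' : Matrix (Fin k) (Fin k) (ZMod 2)) (x : Fin k → ZMod 2) :
    Qform k (M + M') x = Qform k M x + Qform k M' x := by
  simp only [Qform_eq_dotProduct_strictUpper_mulVec, strictUpper_add, add_mulVec, dotProduct_add]

lemma kerdockVec_mul_kerdockVec (k : ℕ) (M M' : Matrix (Fin k) (Fin k) (ZMod 2))
    (w w' x : Fin k → ZMod 2) :
    kerdockVec k M w x * kerdockVec k M' w' x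
      = (2 ^ k)⁻¹ * signChar (Qform k (M + M') x + (w + w') ⬝ᵥ x) := by
  have hsqrt : (Real.sqrt 2)⁻¹ ^ k * (Real.sqrt 2)⁻¹ ^ k = (2 ^ k)⁻¹ := by
    rw [← mul_pow, ← mul_inv, Real.mul_self_sqrt zero_le_two, inv_pow]
  rw [Qform_add, add_dotProduct, add_add_add_comm, AddChar.map_add_eq_mul, ← hsqrt]
  simp only [kerdockVec, signChar, AddChar.coe_mk]
  ring

/-- For skew-symmetric `M, M' ∈ 𝔽₂^{k×k}` with `M + M'` invertible over
`𝔽₂`, the orthonormal bases `{u_{M,w}}_w` and `{u_{M',w'}}_{w'}` are unbiased: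
`⟨u_{M,w}, u_{M',w'}⟩² = 2^{−k}` for all `w, w'`. -/
theorem stmt_9 (k : ℕ) (M M' : Matrix (Fin k) (Fin k) (ZMod 2))
    (hdiag : ∀ i, M i i = 0) (hsym : ∀ i j, M i j = M j i)
    (hdiag' : ∀ i, M' i i = 0) (hsym' : ∀ i j, M' i j = M' j i)
    (hinv : IsUnit (M + M')) :
    ∀ w w' : Fin k → ZMod 2,
      (∑ x : Fin k → ZMod 2, kerdockVec k M w x * kerdockVec k M' w' x) ^ 2
        = ((2 : ℝ) ^ k)⁻¹ := by
  intro w w'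
  have hdiagN : ∀ i, (M + M') i i = 0 := fun i => by simp [hdiag, hdiag']
  have hsymN : ∀ i j, (M + M') i j = (M + M') j i := fun i j => by simp [hsym i j, hsym' i j]
  have hgauss := sq_sum_signChar_of_polarization (mulVec_injective_iff_isUnit.mpr hinv)
    (fun x => Qform k (M + M') x + (w + w') ⬝ᵥ x) fun x z => by
      simp only [Qform_eq_dotProduct_strictUpper_mulVec,
        dotProduct_strictUpper_mulVec_add hdiagN hsymN, dotProduct_add]
      ring
  rw [Fintype.card_fin] at hgauss
  simp_rw [kerdockVec_mul_kerdockVec, ← mul_sum, mul_pow, hgauss]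
  field_simp
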